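/- For an add-free SRT (updates only 'old' or 'new'), the set P^T_{i,j} of contributing positions for register j at step i is a singleton: it equals {m}, where m is the most recent step n ≤ i at which register j was updated with 'new', or {−1} if no such step exists. Consequently, the register value after step i equals R_0[j] or equals a single input data value s[m]. -/
import Mathlib


/-- Register update instructions of an SRT trail. -/
inductive Upd where
  | old | new | add
deriving DecidableEq

/-- For an add-free SRT (no `add` updates), the set of contributing positions
for register `j` at step `i` is a singleton: the register value after steps
`0..i` equals the input data value `s m` at the most recent step `m ≤ i` where
register `j` was updated with `new`, or the initial value `R₀ j` if no such
step exists. -/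
theorem addfree_srt_register_value
    {D : Type*} [AddCommGroup D] {k : ℕ}
    (upd : ℕ → Fin k → Upd) (s : ℕ → D) (R0 : Fin k → D) (R : ℕ → Fin k → D)
    (h0 : R 0 = R0)
    (hstep : ∀ i j, R (i + 1) j =
      match upd i j with
      | .old => R i j
      | .new => s i
      | .add => R i j + s i)
    (haddfree : ∀ i j, upd i j ≠ Upd.add) :
    ∀ (i : ℕ) (j : Fin k),
      (∃ m ≤ i, upd m j = Upd.new ∧
          (∀ n', m < n' → n' ≤ i → upd n' j ≠ Upd.new) ∧ R (i + 1) j = s m) ∨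
      ((∀ n ≤ i, upd n j ≠ Upd.new) ∧ R (i + 1) j = R0 j) := by
  intro i
  induction i with
  | zero =>
    intro j
    have h := hstep 0 j
    cases hu : upd 0 j with
    | old =>
      right
      refine ⟨?_, ?_⟩
      · intro n hn; interval_cases n; simp [hu]
      · rw [h, hu]; simp [h0]
    | new =>
      left
      exact ⟨0, le_refl 0, hu, fun n' h1 h2 => absurd (le_trans h1 h2) (by omega),
        by rw [h, hu]⟩
    | add => exact absurd hu (haddfree 0 j)
  | succ i ih =>
    intro j
    have h := hstep (i + 1) j
    cases hu : upd (i + 1) j with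
    | old =>
      rw [hu] at h
      rcases ih j with ⟨m, hm, hnew, hlast, hval⟩ | ⟨hnone, hval⟩
      · left
        refine ⟨m, le_trans hm (by omega), hnew, ?_, by rw [h, hval]⟩
        intro n' h1 h2
        rcases Nat.lt_or_ge n' (i + 1) with hl | hg
        · exact hlast n' h1 (by omega)
        · have : n' = i + 1 := by omega
          simp [this, hu]
      · right
        refine ⟨?_, by rw [h, hval]⟩
        intro n hn
        rcases Nat.lt_or_ge n (i + 1) with hl | hg
        · exact hnone n (by omega)
        · have : n = i + 1 := by omega
          simp [this, hu]
    | new =>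
      left
      rw [hu] at h
      exact ⟨i + 1, le_refl _, hu, fun n' h1 h2 => absurd (le_trans h1 h2) (by omega), h⟩
    | add => exact absurd hu (haddfree (i + 1) j)
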